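/- The generic Temperley–Lieb category TL (over K = ℂ(t) with d = t + t⁻¹) has no nonzero proper ideal. -/

import Mathlib

/-!
Common definitions: the Temperley–Lieb category over a field `K` with loop
parameter `d`.

An `(m,n)`-Temperley–Lieb diagram is a noncrossing perfect matching of `m`
marked points on the top edge and `n` marked points on the bottom edge of a
rectangle.  We encode it as a fixed-point-free involution of
`Fin m ⊕ Fin n` (`Sum.inl i` is the `i`-th top point, `Sum.inr j` the `j`-th
bottom point) which is noncrossing with respect to the boundary order of the
points (top points from left to right, then bottom points from right to left).
-/

open scoped Classical

namespace TL

/-- The position of a marked point in the linear boundary order of the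
rectangle: top points `0, …, m-1` from left to right, then bottom points
from right to left. -/
def bIdx (m n : ℕ) : Fin m ⊕ Fin n → ℕ
  | Sum.inl i => (i : ℕ)
  | Sum.inr j => m + (n - 1 - (j : ℕ))

/-- An `(m,n)`-Temperley–Lieb diagram: a noncrossing perfect matching
(= fixed-point-free involution) of the `m` top points and `n` bottom points. -/
structure Diagram (m n : ℕ) where
  pair : Fin m ⊕ Fin n → Fin m ⊕ Fin n
  involutive : Function.Involutive pair
  fixedPointFree : ∀ x, pair x ≠ x
  noncrossing : ∀ x y, ¬ (bIdx m n x < bIdx m n y ∧ bIdx m n y < bIdx m n (pair x) ∧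
      bIdx m n (pair x) < bIdx m n (pair y))

noncomputable instance (m n : ℕ) : Fintype (Diagram m n) :=
  Fintype.ofInjective (fun D => D.pair)
    (fun a b h => by cases a; cases b; simpa using h)

/-- `Hom K m n` is the `K`-vector space of morphisms from `m` to `n`:
the free vector space on the set of `(m,n)`-TL diagrams, realized as the
space of `K`-valued functions on the (finite) set of diagrams. -/
abbrev Hom (K : Type) [Field K] (m n : ℕ) : Type := Diagram m n → K

variable {K : Type} [Field K]

/-- The basis vector of `Hom K m n` corresponding to a single diagram. -/
noncomputable def single {m n : ℕ} (p : Diagram m n) : Hom K m n :=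
  fun c => if c = p then 1 else 0

/-! ### Composition -/

/-- The marked points of the picture obtained by stacking an `(l,m)`-diagram
on top of an `(m,n)`-diagram: `l` top points, `m` middle points, `n` bottom
points. -/
abbrev Pt (l m n : ℕ) := Fin l ⊕ (Fin m ⊕ Fin n)

/-- One strand of the stacked picture: either a strand of the top diagram `a`
(on the `l` top and `m` middle points) or a strand of the bottom diagram `b`
(on the `m` middle and `n` bottom points). -/
def Step {l m n : ℕ} (a : Diagram l m) (b : Diagram m n) : Pt l m n → Pt l m n → Prop :=
  fun x y =>
    (∃ u : Fin l ⊕ Fin m, Sum.map id Sum.inl u = x ∧ Sum.map id Sum.inl (a.pair u) = y) ∨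
    (∃ u : Fin m ⊕ Fin n, Sum.inr u = x ∧ Sum.inr (b.pair u) = y)

/-- Connectivity in the stacked picture: two marked points are connected if
they are joined by a path of strands. -/
def Conn {l m n : ℕ} (a : Diagram l m) (b : Diagram m n) : Pt l m n → Pt l m n → Prop :=
  Relation.EqvGen (Step a b)

/-- The points of the middle layer whose connected component stays entirely in
the middle layer; these components are exactly the closed loops produced when
stacking. -/
def ClosedMid {l m n : ℕ} (a : Diagram l m) (b : Diagram m n) : Set (Pt l m n) :=
  {x | (∃ j : Fin m, x = Sum.inr (Sum.inl j)) ∧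
    ∀ y, Conn a b x y → ∃ j : Fin m, y = Sum.inr (Sum.inl j)}

/-- The number of closed loops produced when stacking `a` on top of `b`:
the number of connected components consisting entirely of middle points. -/
noncomputable def numLoops {l m n : ℕ} (a : Diagram l m) (b : Diagram m n) : ℕ :=
  Nat.card (Quotient (⟨fun x y : ClosedMid a b => Conn a b x.1 y.1,
    ⟨fun _ => Relation.EqvGen.refl _, fun h => Relation.EqvGen.symm _ _ h,
      fun h h' => Relation.EqvGen.trans _ _ _ h h'⟩⟩ : Setoid (ClosedMid a b)))

/-- Composition of two diagrams `b ∘ a` (stack `a` on top of `b`, delete the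
`r` closed loops, multiply by `d ^ r`), expressed as an element of
`Hom K l n`: the result is `d ^ r` times the unique `(l,n)`-diagram inducing
the same pairing of the outer points as the connectivity of the stacked
picture. -/
noncomputable def compD (d : K) {l m n : ℕ} (b : Diagram m n) (a : Diagram l m) :
    Hom K l n :=
  fun c =>
    if ∀ x : Fin l ⊕ Fin n,
        Conn a b (Sum.map id Sum.inr x) (Sum.map id Sum.inr (c.pair x))
    then d ^ numLoops a b else 0

/-- Composition `b ∘ a : Hom K l n` of `b : Hom K m n` with `a : Hom K l m`
(bilinear extension of composition of diagrams). -/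
noncomputable def comp (d : K) {l m n : ℕ} (b : Hom K m n) (a : Hom K l m) :
    Hom K l n :=
  fun c => ∑ p : Diagram m n, ∑ q : Diagram l m, b p * a q * compD d p q c

/-! ### Tensor product -/

/-- Relabelling of the marked points of a horizontal juxtaposition of an
`(m,n)`-diagram (placed on the left) and an `(m',n')`-diagram (on the right). -/
def tEquiv (m n m' n' : ℕ) :
    (Fin (m + m') ⊕ Fin (n + n')) ≃ ((Fin m ⊕ Fin n) ⊕ (Fin m' ⊕ Fin n')) :=
  (Equiv.sumCongr finSumFinEquiv.symm finSumFinEquiv.symm).trans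
    (Equiv.sumSumSumComm _ _ _ _)

/-- The pairing of the horizontal juxtaposition of two diagrams. -/
def tensorPair {m n m' n' : ℕ} (a : Diagram m n) (b : Diagram m' n') :
    Fin (m + m') ⊕ Fin (n + n') → Fin (m + m') ⊕ Fin (n + n') :=
  fun x => (tEquiv m n m' n').symm (Sum.map a.pair b.pair (tEquiv m n m' n' x))

/-- The tensor product (horizontal juxtaposition) of two diagrams, as an
element of `Hom K (m+m') (n+n')`: the basis vector of the unique diagram whose
pairing is the juxtaposed pairing. -/
noncomputable def tensorD {m n m' n' : ℕ} (a : Diagram m n) (b : Diagram m' n') :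
    Hom K (m + m') (n + n') :=
  fun c => if c.pair = tensorPair a b then 1 else 0

/-- The tensor product of morphisms (bilinear extension of horizontal
juxtaposition of diagrams). -/
noncomputable def tensor {m n m' n' : ℕ} (x : Hom K m n) (y : Hom K m' n') :
    Hom K (m + m') (n + n') :=
  fun c => ∑ p : Diagram m n, ∑ q : Diagram m' n', x p * y q * tensorD p q c

/-! ### Identity, cup and cap -/

/-- The identity diagram `1_n`: `n` vertical strands. -/
def idD (n : ℕ) : Diagram n n where
  pair := Sum.elim Sum.inr Sum.inl
  involutive := by rintro (i | i) <;> rfl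
  fixedPointFree := by rintro (i | i) <;> simp
  noncrossing := by
    rintro (i | i) (j | j) <;>
      · simp only [Sum.elim_inl, Sum.elim_inr, bIdx]
        have hi := i.isLt; have hj := j.isLt; omega

/-- The identity morphism `1_n ∈ T_n`. -/
noncomputable def idHom (K : Type) [Field K] (n : ℕ) : Hom K n n :=
  fun c => if c = idD n then 1 else 0

/-- The cap `∩`: the unique `(0,2)`-TL diagram. -/
def capD : Diagram 0 2 where
  pair := fun x => match x with
    | Sum.inl i => i.elim0
    | Sum.inr j => Sum.inr ⟨1 - (j : ℕ), by omega⟩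
  involutive := by intro x; revert x; decide
  fixedPointFree := by decide
  noncrossing := by decide

/-- The cup `∪`: the unique `(2,0)`-TL diagram. -/
def cupD : Diagram 2 0 where
  pair := fun x => match x with
    | Sum.inl j => Sum.inl ⟨1 - (j : ℕ), by omega⟩
    | Sum.inr i => i.elim0
  involutive := by intro x; revert x; decide
  fixedPointFree := by decide
  noncrossing := by decide

/-- The cap `∩` as a morphism in `Hom K 0 2`. -/
noncomputable def capHom (K : Type) [Field K] : Hom K 0 2 :=
  fun c => if c = capD then 1 else 0

/-- The cup `∪` as a morphism in `Hom K 2 0`. -/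
noncomputable def cupHom (K : Type) [Field K] : Hom K 2 0 :=
  fun c => if c = cupD then 1 else 0

/-! ### The Markov trace -/

/-- The strands of the picture obtained from an `(n,n)`-diagram `p` by closing
it up: joining, for each `i`, the `i`-th top point to the `i`-th bottom point
(by nested arcs passing to the right of the rectangle). -/
def closeStep {n : ℕ} (p : Diagram n n) : (Fin n ⊕ Fin n) → (Fin n ⊕ Fin n) → Prop :=
  fun x y => p.pair x = y ∨ Sum.elim Sum.inr Sum.inl x = y

/-- The number `c(p)` of closed loops of the closure of an `(n,n)`-diagram. -/
noncomputable def trLoops {n : ℕ} (p : Diagram n n) : ℕ :=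
  Nat.card (Quotient (Relation.EqvGen.setoid (closeStep p)))

/-- The Markov trace `Tr_n : T_n → K`, sending a diagram `p` to
`d ^ c(p)`. -/
noncomputable def Tr (d : K) {n : ℕ} (x : Hom K n n) : K :=
  ∑ p : Diagram n n, x p * d ^ trLoops p

/-! ### Conditional expectations -/

/-- The conditional expectation `ε_n : T_{n+1} → T_n`,
`a ↦ (1_n ⊗ ∪) ∘ (a ⊗ 1_1) ∘ (1_n ⊗ ∩)` (closing up the last strand). -/
noncomputable def eps (d : K) (n : ℕ) (a : Hom K (n + 1) (n + 1)) : Hom K n n :=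
  let u : Hom K n (n + 2) := tensor (idHom K n) (capHom K)
  let v : Hom K (n + 2) (n + 2) := @tensor K _ (n + 1) (n + 1) 1 1 a (idHom K 1)
  let w : Hom K (n + 2) n := tensor (idHom K n) (cupHom K)
  comp d w (comp d v u)

/-- The iterated conditional expectation `ε_{n,n+m} = ε_n ∘ ε_{n+1} ∘ ⋯ ∘ ε_{n+m-1} :
T_{n+m} → T_n`. -/
noncomputable def epsIter (d : K) (n : ℕ) : (m : ℕ) → Hom K (n + m) (n + m) → Hom K n n
  | 0, a => a
  | m + 1, a => epsIter d n m (eps d (n + m) a)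

/-! ### Tensor powers of cup and cap -/

/-- `∩^{⊗k} ∈ Hom(0, 2k)`. -/
noncomputable def capPow (K : Type) [Field K] : (k : ℕ) → Hom K 0 (2 * k)
  | 0 => idHom K 0
  | k + 1 => tensor (capPow K k) (capHom K)

/-- `∪^{⊗k} ∈ Hom(2k, 0)`. -/
noncomputable def cupPow (K : Type) [Field K] : (k : ℕ) → Hom K (2 * k) 0
  | 0 => idHom K 0
  | k + 1 => tensor (cupPow K k) (cupHom K)

/-! ### Ideals -/

/-- An ideal of the Temperley–Lieb category over `(K, d)`: a family of vector
subspaces `J m n ⊆ Hom K m n` closed under composition with arbitrary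
morphisms on either side and under tensor product with arbitrary morphisms on
either side. -/
structure IsIdeal (d : K) (J : ∀ m n : ℕ, Set (Hom K m n)) : Prop where
  zero_mem : ∀ m n : ℕ, (0 : Hom K m n) ∈ J m n
  add_mem : ∀ (m n : ℕ), ∀ x ∈ J m n, ∀ y ∈ J m n, x + y ∈ J m n
  smul_mem : ∀ (m n : ℕ) (c : K), ∀ x ∈ J m n, c • x ∈ J m n
  comp_mem_left : ∀ {l m n : ℕ} (b : Hom K m n) (a : Hom K l m),
    a ∈ J l m → comp d b a ∈ J l n
  comp_mem_right : ∀ {l m n : ℕ} (b : Hom K m n) (a : Hom K l m),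
    b ∈ J m n → comp d b a ∈ J l n
  tensor_mem_left : ∀ {m n m' n' : ℕ} (x : Hom K m n) (y : Hom K m' n'),
    x ∈ J m n → tensor x y ∈ J (m + m') (n + n')
  tensor_mem_right : ∀ {m n m' n' : ℕ} (x : Hom K m n) (y : Hom K m' n'),
    y ∈ J m' n' → tensor x y ∈ J (m + m') (n + n')

/-- An ideal is nonzero if some `J m n` contains a nonzero morphism. -/
def IdealNonzero (J : ∀ m n : ℕ, Set (Hom K m n)) : Prop :=
  ∃ (m n : ℕ) (x : Hom K m n), x ∈ J m n ∧ x ≠ 0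

/-- An ideal is proper if it does not contain all morphisms. -/
def IdealProper (J : ∀ m n : ℕ, Set (Hom K m n)) : Prop :=
  ∃ m n : ℕ, J m n ≠ Set.univ

/-- The negligible morphisms: `a ∈ Hom(m,n)` with `Tr_m (b ∘ a) = 0` for all
`b ∈ Hom(n,m)`. -/
def Negl (d : K) (m n : ℕ) : Set (Hom K m n) :=
  {a | ∀ b : Hom K n m, Tr d (comp d b a) = 0}

/-- The ideal generated by a morphism `x ∈ Hom K a b`: the smallest ideal
containing `x`, i.e. the intersection of all ideals containing `x`. -/
def genIdeal (d : K) {a b : ℕ} (x : Hom K a b) (m n : ℕ) : Set (Hom K m n) :=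
  {y | ∀ J : ∀ m' n' : ℕ, Set (Hom K m' n'), IsIdeal d J → x ∈ J a b → y ∈ J m n}

/-! ### Jones–Wenzl idempotents -/

/-- The diagram `E_i ∈ T_n` (here `i` is 0-indexed, `i + 1 < n`): it joins the
`i`-th and `(i+1)`-st top points, the `i`-th and `(i+1)`-st bottom points, and
joins the `j`-th top point vertically to the `j`-th bottom point for all other
`j`; encoded as a pairing function. -/
def eiPair (n i : ℕ) : Fin n ⊕ Fin n → Fin n ⊕ Fin n
  | Sum.inl j =>
      if (j : ℕ) = i then
        Sum.inl ⟨((j : ℕ) + 1) % n, Nat.mod_lt _ (Nat.lt_of_le_of_lt (Nat.zero_le _) j.isLt)⟩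
      else if (j : ℕ) = i + 1 then
        Sum.inl ⟨(j : ℕ) - 1, Nat.lt_of_le_of_lt (Nat.sub_le _ _) j.isLt⟩
      else Sum.inr j
  | Sum.inr j =>
      if (j : ℕ) = i then
        Sum.inr ⟨((j : ℕ) + 1) % n, Nat.mod_lt _ (Nat.lt_of_le_of_lt (Nat.zero_le _) j.isLt)⟩
      else if (j : ℕ) = i + 1 then
        Sum.inr ⟨(j : ℕ) - 1, Nat.lt_of_le_of_lt (Nat.sub_le _ _) j.isLt⟩
      else Sum.inl j

/-- The morphism `E_i ∈ T_n` (0-indexed `i`). -/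
noncomputable def EHom (K : Type) [Field K] (n i : ℕ) : Hom K n n :=
  fun c => if c.pair = eiPair n i then 1 else 0

/-- A Jones–Wenzl idempotent in `T_n`: a nonzero idempotent `p` with
`E_i ∘ p = p ∘ E_i = 0` for all `i` (1-indexed `1 ≤ i ≤ n-1`; here `i` is
0-indexed, so `i + 2 ≤ n`). -/
def IsJonesWenzl (d : K) (n : ℕ) (p : Hom K n n) : Prop :=
  p ≠ 0 ∧ comp d p p = p ∧
    ∀ i : ℕ, i + 2 ≤ n → comp d (EHom K n i) p = 0 ∧ comp d p (EHom K n i) = 0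

/-- The quantum integers `[k] ∈ K`: `[0] = 0`, `[1] = 1`,
`[k+1] = d·[k] − [k−1]`. -/
def qInt (d : K) : ℕ → K
  | 0 => 0
  | 1 => 1
  | k + 2 => d * qInt d (k + 1) - qInt d k



/-! ### Auxiliary development for stmt1 -/

section Aux

theorem Diagram.ext' {m n : ℕ} {a b : Diagram m n} (h : a.pair = b.pair) : a = b := by
  cases a; cases b; simpa using h

theorem even_card_invol {ι : Type} (s : Finset ι) (f : ι → ι)
    (hmap : ∀ x ∈ s, f x ∈ s) (hinv : ∀ x ∈ s, f (f x) = x)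
    (hfpf : ∀ x ∈ s, f x ≠ x) : Even s.card := by
  classical
  induction s using Finset.strongInduction with
  | _ s ih =>
    rcases s.eq_empty_or_nonempty with rfl | ⟨x, hx⟩
    · simp
    · have hfx : f x ∈ s := hmap x hx
      have hne : f x ≠ x := hfpf x hx
      set t := (s.erase x).erase (f x) with ht
      have hmemt : ∀ y, y ∈ t ↔ y ∈ s ∧ y ≠ f x ∧ y ≠ x := by
        intro y
        simp only [ht, Finset.mem_erase]
        tauto
      have htsub : t ⊂ s := by
        constructor
        · intro y hy; exact ((hmemt y).1 hy).1
        · intro hsub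
          have := (hmemt x).1 (hsub hx)
          exact this.2.2 rfl
      have hcard : s.card = t.card + 2 := by
        have h1 : (s.erase x).card = s.card - 1 := Finset.card_erase_of_mem hx
        have h2 : t.card = (s.erase x).card - 1 :=
          Finset.card_erase_of_mem (Finset.mem_erase.2 ⟨hne, hfx⟩)
        have hpos : 0 < s.card := Finset.card_pos.2 ⟨x, hx⟩
        have hpos2 : 1 < s.card := Finset.one_lt_card.2 ⟨x, hx, f x, hfx, fun h => hne h.symm⟩
        omega
      have hev : Even t.card := by
        refine ih t htsub ?_ ?_ ?_
        · intro y hy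
          obtain ⟨hys, hyfx, hyx⟩ := (hmemt y).1 hy
          refine (hmemt (f y)).2 ⟨hmap y hys, ?_, ?_⟩
          · intro h; exact hyx (by rw [← hinv y hys, h, hinv x hx])
          · intro h; exact hyfx (by rw [← hinv y hys, h])
        · intro y hy; exact hinv y ((hmemt y).1 hy).1
        · intro y hy; exact hfpf y ((hmemt y).1 hy).1
      rw [hcard]
      exact hev.add (even_iff_two_dvd.2 ⟨1, rfl⟩)
      
theorem even_card_invol' {ι : Type} [Fintype ι] (f : ι → ι)
    (hinv : ∀ x, f (f x) = x) (hfpf : ∀ x, f x ≠ x) : Even (Fintype.card ι) := by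
  classical
  exact even_card_invol Finset.univ f (fun x _ => Finset.mem_univ _)
    (fun x _ => hinv x) (fun x _ => hfpf x)

end Aux

section DPow
open Polynomial

theorem TLdlin (J : ℕ) (c : ℕ → ℤ) (hJ : c J ≠ 0) :
    ∑ j ∈ Finset.range (J + 1),
      (c j : RatFunc ℂ) * (RatFunc.X + (RatFunc.X)⁻¹) ^ j ≠ 0 := by
  set D : RatFunc ℂ := RatFunc.X + (RatFunc.X)⁻¹ with hD
  have hX : (RatFunc.X : RatFunc ℂ) ≠ 0 := RatFunc.X_ne_zero
  have hDX : D * RatFunc.X = RatFunc.X ^ 2 + 1 := by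
    rw [hD, add_mul, inv_mul_cancel₀ hX]; ring
  intro hS
  set Q : Polynomial ℂ := ∑ j ∈ Finset.range (J + 1),
    Polynomial.C ((c j : ℂ)) * (((X : Polynomial ℂ) ^ 2 + 1) ^ j * X ^ (J - j)) with hQ
  have hAQ : algebraMap (Polynomial ℂ) (RatFunc ℂ) Q =
      RatFunc.X ^ J * ∑ j ∈ Finset.range (J + 1), (c j : RatFunc ℂ) * D ^ j := by
    rw [hQ, map_sum, Finset.mul_sum]
    refine Finset.sum_congr rfl fun j hj => ?_
    have hjJ : j ≤ J := Nat.lt_succ_iff.1 (Finset.mem_range.1 hj)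
    rw [map_mul, map_mul, map_pow, map_pow, map_add, map_pow, map_one,
      RatFunc.algebraMap_C, RatFunc.algebraMap_X, map_intCast (RatFunc.C : ℂ →+* RatFunc ℂ) (c j),
      ← hDX, mul_pow]
    rw [show D ^ j * RatFunc.X ^ j * RatFunc.X ^ (J - j)
        = D ^ j * RatFunc.X ^ (j + (J - j)) by rw [pow_add]; ring,
      Nat.add_sub_cancel' hjJ]
    ring
  have hcoeff : Q.coeff (2 * J) = (c J : ℂ) := by
    rw [hQ, finset_sum_coeff, Finset.sum_eq_single J]
    · have hm : ((X : Polynomial ℂ) ^ 2 + 1).Monic := by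
        simpa using monic_X_pow_add_C (1 : ℂ) (two_ne_zero)
      have hnd : (((X : Polynomial ℂ) ^ 2 + 1) ^ J).natDegree = 2 * J := by
        rw [hm.natDegree_pow]
        have h2 : ((X : Polynomial ℂ) ^ 2 + 1).natDegree = 2 := by
          simpa using natDegree_X_pow_add_C (n := 2) (r := (1 : ℂ))
        rw [h2]; ring
      rw [Nat.sub_self, pow_zero, mul_one, coeff_C_mul, ← hnd,
        (hm.pow J).coeff_natDegree, mul_one]
    · intro j hj hne
      have hjJ : j < J := lt_of_le_of_ne (Nat.lt_succ_iff.1 (Finset.mem_range.1 hj)) hne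
      apply coeff_eq_zero_of_natDegree_lt
      calc (Polynomial.C ((c j : ℂ)) *
            (((X : Polynomial ℂ) ^ 2 + 1) ^ j * X ^ (J - j))).natDegree
          ≤ ((((X : Polynomial ℂ) ^ 2 + 1) ^ j * X ^ (J - j))).natDegree :=
            natDegree_C_mul_le _ _
        _ ≤ (((X : Polynomial ℂ) ^ 2 + 1) ^ j).natDegree
            + ((X : Polynomial ℂ) ^ (J - j)).natDegree := natDegree_mul_le
        _ ≤ j * ((X : Polynomial ℂ) ^ 2 + 1).natDegree + (J - j) := by
            rw [natDegree_X_pow]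
            exact Nat.add_le_add_right (natDegree_pow_le) _
        _ < 2 * J := by
            have h2 : ((X : Polynomial ℂ) ^ 2 + 1).natDegree = 2 := by
              simpa using natDegree_X_pow_add_C (n := 2) (r := (1 : ℂ))
            rw [h2]; omega
    · intro h; exact absurd (Finset.self_mem_range_succ J) h
  have hQ0 : Q = 0 := by
    apply RatFunc.algebraMap_injective ℂ
    rw [hAQ, hS, mul_zero, map_zero]
  rw [hQ0, Polynomial.coeff_zero] at hcoeff
  exact hJ (by exact_mod_cast hcoeff.symm)

end DPow

section Orbits

theorem eqvGen_invariant {ι γ : Type} {r : ι → ι → Prop} (g : ι → γ)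
    (h : ∀ a b, r a b → g a = g b) {a b : ι} (hab : Relation.EqvGen r a b) :
    g a = g b := by
  induction hab with
  | rel a b h' => exact h a b h'
  | refl => rfl
  | symm a b _ ih => exact ih.symm
  | trans a b c _ _ ih1 ih2 => exact ih1.trans ih2

variable {N : ℕ}

/-- The "loop" relation generated by two involutions. -/
def orbRel (α β : Fin N → Fin N) : Fin N → Fin N → Prop :=
  fun j k => k = α j ∨ k = β j

noncomputable def orbSetoid (α β : Fin N → Fin N) : Setoid (Fin N) :=
  Relation.EqvGen.setoid (orbRel α β)

noncomputable def cnt (α β : Fin N → Fin N) : ℕ :=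
  Nat.card (Quotient (orbSetoid α β))

variable (α β : Fin N → Fin N)

theorem orb_mk_alpha (j : Fin N) :
    (⟦α j⟧ : Quotient (orbSetoid α β)) = ⟦j⟧ :=
  Quotient.sound (Relation.EqvGen.symm _ _ (Relation.EqvGen.rel _ _ (Or.inl rfl)))

theorem orb_mk_beta (j : Fin N) :
    (⟦β j⟧ : Quotient (orbSetoid α β)) = ⟦j⟧ :=
  Quotient.sound (Relation.EqvGen.symm _ _ (Relation.EqvGen.rel _ _ (Or.inr rfl)))

noncomputable def orbFiber (q : Quotient (orbSetoid α β)) : Finset (Fin N) :=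
  Finset.univ.filter (fun j : Fin N => (⟦j⟧ : Quotient (orbSetoid α β)) = q)

theorem orb_card_sum :
    N = ∑ q : Quotient (orbSetoid α β), (orbFiber α β q).card := by
  have h := Finset.card_eq_sum_card_fiberwise
    (f := fun j : Fin N => (⟦j⟧ : Quotient (orbSetoid α β)))
    (s := Finset.univ) (t := Finset.univ) (fun x _ => Finset.mem_univ _)
  simpa [orbFiber] using h

theorem orb_fiber_two_le (hαf : ∀ j, α j ≠ j) (q : Quotient (orbSetoid α β)) :
    2 ≤ (orbFiber α β q).card := by
  obtain ⟨j, rfl⟩ := Quotient.exists_rep q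
  have hsub : ({j, α j} : Finset (Fin N)) ⊆ orbFiber α β ⟦j⟧ := by
    intro k hk
    rcases Finset.mem_insert.1 hk with rfl | hk
    · exact Finset.mem_filter.2 ⟨Finset.mem_univ _, rfl⟩
    · rcases Finset.mem_singleton.1 hk with rfl
      exact Finset.mem_filter.2 ⟨Finset.mem_univ _, orb_mk_alpha α β j⟩
  calc 2 = ({j, α j} : Finset (Fin N)).card :=
        (Finset.card_pair (Ne.symm (hαf j))).symm
    _ ≤ _ := Finset.card_le_card hsub

theorem cnt_two_le (hαf : ∀ j, α j ≠ j) :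
    2 * Fintype.card (Quotient (orbSetoid α β)) ≤ N := by
  have h := orb_card_sum α β
  have h2 : ∑ _q : Quotient (orbSetoid α β), 2 ≤
      ∑ q : Quotient (orbSetoid α β), (orbFiber α β q).card :=
    Finset.sum_le_sum (fun q _ => orb_fiber_two_le α β hαf q)
  have h3 : ∑ _q : Quotient (orbSetoid α β), 2
      = 2 * Fintype.card (Quotient (orbSetoid α β)) := by
    simp [Finset.sum_const, mul_comm]
  omega

theorem orb_fiber_eq_pair (hαi : ∀ j, α (α j) = j) (j : Fin N) :
    orbFiber α α ⟦j⟧ = {j, α j} := by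
  apply Finset.Subset.antisymm
  · intro k hk
    have hrel : Relation.EqvGen (orbRel α α) k j := by
      have := (Finset.mem_filter.1 hk).2
      exact Quotient.exact this
    have hinv : ∀ a b, orbRel α α a b → (s(a, α a) : Sym2 (Fin N)) = s(b, α b) := by
      intro a b hab
      rcases hab with rfl | rfl <;>
        · rw [hαi a]; exact Sym2.eq_swap.symm
    have := eqvGen_invariant _ hinv hrel
    rcases Sym2.eq_iff.1 this with ⟨rfl, _⟩ | ⟨h1, h2⟩
    · exact Finset.mem_insert_self _ _
    · rw [h1]; simp
  · intro k hk
    rcases Finset.mem_insert.1 hk with rfl | hk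
    · exact Finset.mem_filter.2 ⟨Finset.mem_univ _, rfl⟩
    · rcases Finset.mem_singleton.1 hk with rfl
      exact Finset.mem_filter.2 ⟨Finset.mem_univ _, orb_mk_alpha α α j⟩

theorem cnt_diag (hαi : ∀ j, α (α j) = j) (hαf : ∀ j, α j ≠ j) :
    2 * Fintype.card (Quotient (orbSetoid α α)) = N := by
  have h := orb_card_sum α α
  have hfib : ∀ q : Quotient (orbSetoid α α), (orbFiber α α q).card = 2 := by
    intro q
    obtain ⟨j, rfl⟩ := Quotient.exists_rep q
    rw [orb_fiber_eq_pair α hαi j]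
    exact Finset.card_pair (Ne.symm (hαf j))
  have h4 : ∑ q : Quotient (orbSetoid α α), (orbFiber α α q).card
      = 2 * Fintype.card (Quotient (orbSetoid α α)) := by
    rw [Finset.sum_congr rfl (fun q _ => hfib q)]
    simp [Finset.sum_const, mul_comm]
  omega

theorem orb_beta_eq_alpha (hαi : ∀ j, α (α j) = j) (hαf : ∀ j, α j ≠ j)
    (hβf : ∀ j, β j ≠ j)
    (h2 : 2 * Fintype.card (Quotient (orbSetoid α β)) = N) :
    ∀ j, β j = α j := by
  have hall : ∀ q : Quotient (orbSetoid α β), (orbFiber α β q).card = 2 := by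
    by_contra hne
    push_neg at hne
    obtain ⟨q0, hq0⟩ := hne
    have hlt : ∑ _q : Quotient (orbSetoid α β), 2 <
        ∑ q : Quotient (orbSetoid α β), (orbFiber α β q).card := by
      apply Finset.sum_lt_sum
      · intro q _; exact orb_fiber_two_le α β hαf q
      · exact ⟨q0, Finset.mem_univ _,
          lt_of_le_of_ne (orb_fiber_two_le α β hαf q0) (Ne.symm hq0)⟩
    rw [← orb_card_sum α β] at hlt
    simp only [Finset.sum_const, Finset.card_univ, smul_eq_mul] at hlt
    omega
  intro j
  have hsub : ({j, α j} : Finset (Fin N)) ⊆ orbFiber α β ⟦j⟧ := by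
    intro k hk
    rcases Finset.mem_insert.1 hk with rfl | hk
    · exact Finset.mem_filter.2 ⟨Finset.mem_univ _, rfl⟩
    · rcases Finset.mem_singleton.1 hk with rfl
      exact Finset.mem_filter.2 ⟨Finset.mem_univ _, orb_mk_alpha α β j⟩
  have heq : ({j, α j} : Finset (Fin N)) = orbFiber α β ⟦j⟧ := by
    apply Finset.eq_of_subset_of_card_le hsub
    rw [hall ⟦j⟧, Finset.card_pair (Ne.symm (hαf j))]
  have hβmem : β j ∈ ({j, α j} : Finset (Fin N)) := by
    rw [heq]
    exact Finset.mem_filter.2 ⟨Finset.mem_univ _, orb_mk_beta α β j⟩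
  rcases Finset.mem_insert.1 hβmem with h | h
  · exact absurd h (hβf j)
  · exact Finset.mem_singleton.1 h

end Orbits

section DiagConstr

/-- The relabelling of the boundary points used when bending all top points of
an `(m,n)`-diagram to the bottom. -/
def phiFun (m n : ℕ) (j : Fin (n + m)) : Fin m ⊕ Fin n :=
  if h : (j : ℕ) < n then Sum.inr ⟨(j : ℕ), h⟩
  else Sum.inl ⟨m - 1 - ((j : ℕ) - n), by have := j.isLt; omega⟩

def phiInv (m n : ℕ) : Fin m ⊕ Fin n → Fin (n + m)
  | Sum.inl i => ⟨n + (m - 1 - (i : ℕ)), by have := i.isLt; omega⟩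
  | Sum.inr k => ⟨(k : ℕ), by have := k.isLt; omega⟩

def phiE (m n : ℕ) : Fin (n + m) ≃ (Fin m ⊕ Fin n) where
  toFun := phiFun m n
  invFun := phiInv m n
  left_inv j := by
    have hj := j.isLt
    unfold phiFun
    by_cases h : (j : ℕ) < n
    · rw [dif_pos h]
      exact Fin.ext rfl
    · rw [dif_neg h]
      show (⟨n + (m - 1 - (m - 1 - ((j : ℕ) - n))), _⟩ : Fin (n + m)) = j
      apply Fin.ext
      simp only []
      omega
  right_inv z := by
    rcases z with i | k
    · have hi := i.isLt
      show phiFun m n ⟨n + (m - 1 - (i : ℕ)), _⟩ = Sum.inl i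
      unfold phiFun
      rw [dif_neg (by simp only []; omega)]
      simp only [Sum.inl.injEq]
      apply Fin.ext
      simp only []
      omega
    · have hk := k.isLt
      show phiFun m n ⟨(k : ℕ), _⟩ = Sum.inr k
      unfold phiFun
      rw [dif_pos (by simp only []; omega : ((⟨(k : ℕ), by omega⟩ : Fin (n + m)) : ℕ) < n)]

theorem bIdx_phiE {m n : ℕ} (j : Fin (n + m)) :
    bIdx m n (phiE m n j) = bIdx 0 (n + m) (Sum.inr j) := by
  have hj := j.isLt
  by_cases h : (j : ℕ) < n
  · simp only [phiE, Equiv.coe_fn_mk, phiFun, dif_pos h, bIdx]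
    omega
  · simp only [phiE, Equiv.coe_fn_mk, phiFun, dif_neg h, bIdx]
    omega

/-- Bending all top points of a diagram to the bottom: the underlying involution. -/
def bendPerm {m n : ℕ} (r : Diagram m n) : Fin (n + m) → Fin (n + m) :=
  fun j => (phiE m n).symm (r.pair (phiE m n j))

theorem bendPerm_invol {m n : ℕ} (r : Diagram m n) (j : Fin (n + m)) :
    bendPerm r (bendPerm r j) = j := by
  simp [bendPerm, Equiv.apply_symm_apply, r.involutive (phiE m n j)]

theorem bendPerm_fpf {m n : ℕ} (r : Diagram m n) (j : Fin (n + m)) :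
    bendPerm r j ≠ j := by
  intro h
  apply r.fixedPointFree (phiE m n j)
  have := congrArg (phiE m n) h
  simpa [bendPerm, Equiv.apply_symm_apply] using this

theorem pair_phiE {m n : ℕ} (r : Diagram m n) (j : Fin (n + m)) :
    r.pair (phiE m n j) = phiE m n (bendPerm r j) := by
  simp [bendPerm, Equiv.apply_symm_apply]

/-- The bend of an `(m,n)`-diagram: the corresponding `(0, n+m)`-diagram. -/
def bendD {m n : ℕ} (r : Diagram m n) : Diagram 0 (n + m) where
  pair x := Sum.elim (fun i => i.elim0) (fun j => Sum.inr (bendPerm r j)) x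
  involutive := by
    rintro (i | j)
    · exact i.elim0
    · simp [bendPerm_invol]
  fixedPointFree := by
    rintro (i | j)
    · exact i.elim0
    · simpa using bendPerm_fpf r j
  noncrossing := by
    rintro (i | j1) (i2 | j2)
    · exact fun h => i.elim0
    · exact fun h => i.elim0
    · exact fun h => i2.elim0
    · intro hcon
      simp only [Sum.elim_inr] at hcon
      apply r.noncrossing (phiE m n j1) (phiE m n j2)
      rw [pair_phiE, pair_phiE, bIdx_phiE, bIdx_phiE, bIdx_phiE, bIdx_phiE]
      exact hcon

/-- The underlying involution of `Fin N` of a `(0,N)`-diagram. -/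
def alphaOf {N : ℕ} (q : Diagram 0 N) : Fin N → Fin N :=
  fun j => Sum.elim (fun i => i.elim0) id (q.pair (Sum.inr j))

theorem pair_inr_alphaOf {N : ℕ} (q : Diagram 0 N) (j : Fin N) :
    q.pair (Sum.inr j) = Sum.inr (alphaOf q j) := by
  rcases h : q.pair (Sum.inr j) with i | k
  · exact i.elim0
  · simp [alphaOf, h]

theorem alphaOf_invol {N : ℕ} (q : Diagram 0 N) (j : Fin N) :
    alphaOf q (alphaOf q j) = j := by
  have h := q.involutive (Sum.inr j)
  rw [pair_inr_alphaOf, pair_inr_alphaOf] at h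
  exact Sum.inr_injective h

theorem alphaOf_fpf {N : ℕ} (q : Diagram 0 N) (j : Fin N) :
    alphaOf q j ≠ j := by
  intro h
  apply q.fixedPointFree (Sum.inr j)
  rw [pair_inr_alphaOf, h]

theorem alphaOf_bendD {m n : ℕ} (r : Diagram m n) (j : Fin (n + m)) :
    alphaOf (bendD r) j = bendPerm r j := rfl

/-- The underlying involution of `Fin N` of an `(N,0)`-diagram. -/
def betaOf {N : ℕ} (s : Diagram N 0) : Fin N → Fin N :=
  fun j => Sum.elim id (fun i => i.elim0) (s.pair (Sum.inl j))

theorem pair_inl_betaOf {N : ℕ} (s : Diagram N 0) (j : Fin N) :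
    s.pair (Sum.inl j) = Sum.inl (betaOf s j) := by
  rcases h : s.pair (Sum.inl j) with k | i
  · simp [betaOf, h]
  · exact i.elim0

theorem betaOf_invol {N : ℕ} (s : Diagram N 0) (j : Fin N) :
    betaOf s (betaOf s j) = j := by
  have h := s.involutive (Sum.inl j)
  rw [pair_inl_betaOf, pair_inl_betaOf] at h
  exact Sum.inl_injective h

theorem betaOf_fpf {N : ℕ} (s : Diagram N 0) (j : Fin N) :
    betaOf s j ≠ j := by
  intro h
  apply s.fixedPointFree (Sum.inl j)
  rw [pair_inl_betaOf, h]

/-- The transpose (vertical flip) of a `(0,N)`-diagram, as an `(N,0)`-diagram. -/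
def transpD {N : ℕ} (q : Diagram 0 N) : Diagram N 0 where
  pair x := Sum.elim (fun j => Sum.inl (alphaOf q j)) (fun i => i.elim0) x
  involutive := by
    rintro (j | i)
    · simp [alphaOf_invol]
    · exact i.elim0
  fixedPointFree := by
    rintro (j | i)
    · simpa using alphaOf_fpf q j
    · exact i.elim0
  noncrossing := by
    rintro (j1 | i) (j2 | i2)
    case inr.inl => exact fun h => i.elim0
    case inr.inr => exact fun h => i.elim0
    case inl.inr => exact fun h => i2.elim0
    intro hcon
    simp only [Sum.elim_inl, bIdx] at hcon
    apply q.noncrossing (Sum.inr (alphaOf q j2)) (Sum.inr (alphaOf q j1))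
    rw [pair_inr_alphaOf, pair_inr_alphaOf, alphaOf_invol, alphaOf_invol]
    simp only [bIdx]
    have h1 := j1.isLt
    have h2 := j2.isLt
    have h3 := (alphaOf q j1).isLt
    have h4 := (alphaOf q j2).isLt
    omega

theorem betaOf_transpD {N : ℕ} (q : Diagram 0 N) :
    betaOf (transpD q) = alphaOf q := rfl

/-- The rainbow cap diagram on `m+m` bottom points. -/
def capRD (m : ℕ) : Diagram 0 (m + m) where
  pair x := match x with
    | Sum.inl i => i.elim0
    | Sum.inr j => Sum.inr ⟨m + m - 1 - (j : ℕ), by have := j.isLt; omega⟩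
  involutive := by
    rintro (i | j)
    · exact i.elim0
    · have := j.isLt
      simp only [Sum.elim_inr]
      congr 1
      apply Fin.ext
      simp only []
      omega
  fixedPointFree := by
    rintro (i | j)
    · exact i.elim0
    · have := j.isLt
      simp only [Sum.elim_inr, ne_eq, Sum.inr.injEq]
      intro h
      have := congrArg Fin.val h
      simp only [] at this
      omega
  noncrossing := by
    rintro (i | j1) (i2 | j2)
    · exact fun h => i.elim0
    · exact fun h => i.elim0
    · exact fun h => i2.elim0
    · intro hcon
      simp only [Sum.elim_inr, bIdx] at hcon
      have h1 := j1.isLt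
      have h2 := j2.isLt
      omega

/-- The unique `(0,0)`-diagram. -/
def d00 : Diagram 0 0 where
  pair x := Sum.elim (fun i => i.elim0) (fun i => i.elim0) x
  involutive := by rintro (i | i) <;> exact i.elim0
  fixedPointFree := by rintro (i | i) <;> exact i.elim0
  noncrossing := by rintro (i | i) _ <;> exact fun h => i.elim0

theorem eq_d00 (c : Diagram 0 0) : c = d00 := by
  apply Diagram.ext'
  funext x
  rcases x with i | i <;> exact i.elim0

end DiagConstr

section LoopCount

variable {N : ℕ}

def toPt (j : Fin N) : Pt 0 N 0 := Sum.inr (Sum.inl j)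

def toIdx : Pt 0 N 0 → Fin N
  | Sum.inl i => i.elim0
  | Sum.inr (Sum.inl j) => j
  | Sum.inr (Sum.inr i) => i.elim0

variable (q : Diagram 0 N) (s : Diagram N 0)

theorem conn_to_eqvGen {x y : Pt 0 N 0} (h : Conn q s x y) :
    Relation.EqvGen (orbRel (alphaOf q) (betaOf s)) (toIdx x) (toIdx y) := by
  induction h with
  | rel a b hab =>
    apply Relation.EqvGen.rel
    rcases hab with ⟨u, hx, hy⟩ | ⟨u, hx, hy⟩
    · rcases u with i | j
      · exact i.elim0
      · subst hx; subst hy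
        rw [pair_inr_alphaOf]
        exact Or.inl rfl
    · rcases u with j | i
      · subst hx; subst hy
        rw [pair_inl_betaOf]
        exact Or.inr rfl
      · exact i.elim0
  | refl a => exact Relation.EqvGen.refl _
  | symm a b _ ih => exact Relation.EqvGen.symm _ _ ih
  | trans a b c _ _ ih1 ih2 => exact Relation.EqvGen.trans _ _ _ ih1 ih2

theorem eqvGen_to_conn {j k : Fin N}
    (h : Relation.EqvGen (orbRel (alphaOf q) (betaOf s)) j k) :
    Conn q s (toPt j) (toPt k) := by
  induction h with
  | rel a b hab =>
    apply Relation.EqvGen.rel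
    rcases hab with rfl | rfl
    · exact Or.inl ⟨Sum.inr a, rfl, by rw [pair_inr_alphaOf]; rfl⟩
    · exact Or.inr ⟨Sum.inl a, rfl, by rw [pair_inl_betaOf]; rfl⟩
  | refl a => exact Relation.EqvGen.refl _
  | symm a b _ ih => exact Relation.EqvGen.symm _ _ ih
  | trans a b c _ _ ih1 ih2 => exact Relation.EqvGen.trans _ _ _ ih1 ih2

theorem mem_closedMid (j : Fin N) : toPt j ∈ ClosedMid q s := by
  refine ⟨⟨j, rfl⟩, fun y _ => ?_⟩
  rcases y with i | (j' | i)
  · exact i.elim0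
  · exact ⟨j', rfl⟩
  · exact i.elim0

theorem numLoops_eq_cnt : numLoops q s = cnt (alphaOf q) (betaOf s) := by
  unfold numLoops cnt
  refine (Nat.card_congr (Quotient.congr ?_ ?_)).symm
  · exact Equiv.ofBijective (fun j => ⟨toPt j, mem_closedMid q s j⟩)
      ⟨fun a b h => by
        have := congrArg Subtype.val h
        simpa [toPt] using this,
       fun x => by
        obtain ⟨y, hmem⟩ := x
        rcases y with i | (j' | i)
        · exact i.elim0
        · exact ⟨j', Subtype.ext rfl⟩
        · exact i.elim0⟩
  · intro j k
    constructor
    · intro h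
      exact eqvGen_to_conn q s h
    · intro h
      have := conn_to_eqvGen q s h
      exact (by simpa [toPt, toIdx] using this : Relation.EqvGen (orbRel (alphaOf q) (betaOf s)) j k)

theorem numLoops_zero_of_no_closed {l m n : ℕ} (a : Diagram l m) (b : Diagram m n)
    (h : ∀ x, x ∉ ClosedMid a b) : numLoops a b = 0 := by
  have he : IsEmpty (ClosedMid a b) := ⟨fun x => h x.1 x.2⟩
  unfold numLoops
  haveI : IsEmpty (Quotient (⟨fun x y : ClosedMid a b => Conn a b x.1 y.1,
      ⟨fun _ => Relation.EqvGen.refl _, fun h => Relation.EqvGen.symm _ _ h,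
        fun h h' => Relation.EqvGen.trans _ _ _ h h'⟩⟩ : Setoid (ClosedMid a b))) :=
    ⟨fun x => Quotient.inductionOn x he.false⟩
  exact Nat.card_of_isEmpty

end LoopCount

section TEquivLemmas

variable {m n m' n' : ℕ}

theorem tEquiv_symm_ll (i : Fin m) :
    (tEquiv m n m' n').symm (Sum.inl (Sum.inl i)) = Sum.inl (Fin.castAdd m' i) := by
  simp [tEquiv, Equiv.sumSumSumComm]

theorem tEquiv_symm_rl (i : Fin m') :
    (tEquiv m n m' n').symm (Sum.inr (Sum.inl i)) = Sum.inl (Fin.natAdd m i) := by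
  simp [tEquiv, Equiv.sumSumSumComm]

theorem tEquiv_symm_lr (k : Fin n) :
    (tEquiv m n m' n').symm (Sum.inl (Sum.inr k)) = Sum.inr (Fin.castAdd n' k) := by
  simp [tEquiv, Equiv.sumSumSumComm]

theorem tEquiv_symm_rr (k : Fin n') :
    (tEquiv m n m' n').symm (Sum.inr (Sum.inr k)) = Sum.inr (Fin.natAdd n k) := by
  simp [tEquiv, Equiv.sumSumSumComm]

theorem tEquiv_castAdd_l (i : Fin m) :
    tEquiv m n m' n' (Sum.inl (Fin.castAdd m' i)) = Sum.inl (Sum.inl i) := by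
  rw [Equiv.apply_eq_iff_eq_symm_apply, tEquiv_symm_ll]

theorem tEquiv_natAdd_l (i : Fin m') :
    tEquiv m n m' n' (Sum.inl (Fin.natAdd m i)) = Sum.inr (Sum.inl i) := by
  rw [Equiv.apply_eq_iff_eq_symm_apply, tEquiv_symm_rl]

theorem tEquiv_castAdd_r (k : Fin n) :
    tEquiv m n m' n' (Sum.inr (Fin.castAdd n' k)) = Sum.inl (Sum.inr k) := by
  rw [Equiv.apply_eq_iff_eq_symm_apply, tEquiv_symm_lr]

theorem tEquiv_natAdd_r (k : Fin n') :
    tEquiv m n m' n' (Sum.inr (Fin.natAdd n k)) = Sum.inr (Sum.inr k) := by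
  rw [Equiv.apply_eq_iff_eq_symm_apply, tEquiv_symm_rr]

variable (r : Diagram m n) (q' : Diagram m' n')

theorem tensorPair_castAdd_l (i : Fin m) :
    tensorPair r q' (Sum.inl (Fin.castAdd m' i)) =
      Sum.map (Fin.castAdd m') (Fin.castAdd n') (r.pair (Sum.inl i)) := by
  unfold tensorPair
  rw [tEquiv_castAdd_l]
  rcases h : r.pair (Sum.inl i) with w | w <;>
    simp [h, tEquiv_symm_ll, tEquiv_symm_lr]

theorem tensorPair_castAdd_r (k : Fin n) :
    tensorPair r q' (Sum.inr (Fin.castAdd n' k)) =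
      Sum.map (Fin.castAdd m') (Fin.castAdd n') (r.pair (Sum.inr k)) := by
  unfold tensorPair
  rw [tEquiv_castAdd_r]
  rcases h : r.pair (Sum.inr k) with w | w <;>
    simp [h, tEquiv_symm_ll, tEquiv_symm_lr]

theorem tensorPair_natAdd_l (i : Fin m') :
    tensorPair r q' (Sum.inl (Fin.natAdd m i)) =
      Sum.map (Fin.natAdd m) (Fin.natAdd n) (q'.pair (Sum.inl i)) := by
  unfold tensorPair
  rw [tEquiv_natAdd_l]
  rcases h : q'.pair (Sum.inl i) with w | w <;>
    simp [h, tEquiv_symm_rl, tEquiv_symm_rr]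

theorem tensorPair_natAdd_r (k : Fin n') :
    tensorPair r q' (Sum.inr (Fin.natAdd n k)) =
      Sum.map (Fin.natAdd m) (Fin.natAdd n) (q'.pair (Sum.inr k)) := by
  unfold tensorPair
  rw [tEquiv_natAdd_r]
  rcases h : q'.pair (Sum.inr k) with w | w <;>
    simp [h, tEquiv_symm_rl, tEquiv_symm_rr]

end TEquivLemmas

section TensorUnit

theorem map_castAdd_zero {m n : ℕ} (z : Fin m ⊕ Fin n) :
    Sum.map (Fin.castAdd 0) (Fin.castAdd 0) z = z := by
  rcases z with w | w
  · exact congrArg Sum.inl (Fin.ext rfl)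
  · exact congrArg Sum.inr (Fin.ext rfl)

theorem tensorPair_idD_zero {m n : ℕ} (p : Diagram m n) :
    tensorPair p (idD 0) = p.pair := by
  funext x
  rcases x with v | k
  · have hv : (Sum.inl v : Fin (m + 0) ⊕ Fin (n + 0))
        = Sum.inl (Fin.castAdd 0 ⟨(v : ℕ), v.isLt⟩) :=
      congrArg Sum.inl (Fin.ext rfl)
    rw [hv, tensorPair_castAdd_l]
    have hv2 : (⟨(v : ℕ), v.isLt⟩ : Fin m) = v := Fin.ext rfl
    rw [hv2]
    exact map_castAdd_zero _
  · have hk : (Sum.inr k : Fin (m + 0) ⊕ Fin (n + 0))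
        = Sum.inr (Fin.castAdd 0 ⟨(k : ℕ), k.isLt⟩) :=
      congrArg Sum.inr (Fin.ext rfl)
    rw [hk, tensorPair_castAdd_r]
    have hk2 : (⟨(k : ℕ), k.isLt⟩ : Fin n) = k := Fin.ext rfl
    rw [hk2]
    exact map_castAdd_zero _

end TensorUnit

section TensD

variable {m n : ℕ}

def iotaT (m n : ℕ) : Fin m ⊕ Fin n → Fin (m + m) ⊕ Fin (n + m) :=
  Sum.map (Fin.castAdd m) (Fin.castAdd m)

theorem bIdx_inl {m n : ℕ} (i : Fin m) : bIdx m n (Sum.inl i) = (i : ℕ) := rfl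

theorem bIdx_inr {m n : ℕ} (k : Fin n) :
    bIdx m n (Sum.inr k) = m + (n - 1 - (k : ℕ)) := rfl

theorem iotaT_inj {z z' : Fin m ⊕ Fin n} (h : iotaT m n z = iotaT m n z') : z = z' := by
  rcases z with i | k <;> rcases z' with i' | k'
  · simp only [iotaT, Sum.map_inl, Sum.inl.injEq] at h
    exact congrArg Sum.inl (Fin.ext (by simpa using congrArg Fin.val h))
  · exact absurd h (by simp [iotaT])
  · exact absurd h (by simp [iotaT])
  · simp only [iotaT, Sum.map_inr, Sum.inr.injEq] at h
    exact congrArg Sum.inr (Fin.ext (by simpa using congrArg Fin.val h))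

variable (r : Diagram m n)

theorem tp_iotaT (z : Fin m ⊕ Fin n) :
    tensorPair r (idD m) (iotaT m n z) = iotaT m n (r.pair z) := by
  rcases z with i | k
  · exact tensorPair_castAdd_l r (idD m) i
  · exact tensorPair_castAdd_r r (idD m) k

theorem tp_natAdd_left (i : Fin m) :
    tensorPair r (idD m) (Sum.inl (Fin.natAdd m i)) = Sum.inr (Fin.natAdd n i) := by
  rw [tensorPair_natAdd_l r (idD m) i]; rfl

theorem tp_natAdd_right (i : Fin m) :
    tensorPair r (idD m) (Sum.inr (Fin.natAdd n i)) = Sum.inl (Fin.natAdd m i) := by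
  rw [tensorPair_natAdd_r r (idD m) i]; rfl

theorem classifyT (x : Fin (m + m) ⊕ Fin (n + m)) :
    (∃ z, x = iotaT m n z) ∨ (∃ i : Fin m, x = Sum.inl (Fin.natAdd m i)) ∨
      (∃ i : Fin m, x = Sum.inr (Fin.natAdd n i)) := by
  rcases x with v | k
  · by_cases h : (v : ℕ) < m
    · exact Or.inl ⟨Sum.inl ⟨(v : ℕ), h⟩, congrArg Sum.inl (Fin.ext rfl)⟩
    · refine Or.inr (Or.inl ⟨⟨(v : ℕ) - m, by have := v.isLt; omega⟩, ?_⟩)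
      refine congrArg Sum.inl (Fin.ext ?_)
      show (v : ℕ) = m + ((v : ℕ) - m)
      have := v.isLt; omega
  · by_cases h : (k : ℕ) < n
    · exact Or.inl ⟨Sum.inr ⟨(k : ℕ), h⟩, congrArg Sum.inr (Fin.ext rfl)⟩
    · refine Or.inr (Or.inr ⟨⟨(k : ℕ) - n, by have := k.isLt; omega⟩, ?_⟩)
      refine congrArg Sum.inr (Fin.ext ?_)
      show (k : ℕ) = n + ((k : ℕ) - n)
      have := k.isLt; omega

theorem B_iotaT (z : Fin m ⊕ Fin n) :
    (bIdx (m + m) (n + m) (iotaT m n z) = bIdx m n z ∧ bIdx m n z < m) ∨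
      (bIdx (m + m) (n + m) (iotaT m n z) = bIdx m n z + (m + m) ∧
        m ≤ bIdx m n z ∧ bIdx m n z < m + n) := by
  rcases z with i | k
  · left
    have := i.isLt
    rw [show iotaT m n (Sum.inl i) = Sum.inl (Fin.castAdd m i) from rfl,
      bIdx_inl, bIdx_inl, Fin.coe_castAdd]
    exact ⟨rfl, this⟩
  · right
    have := k.isLt
    rw [show iotaT m n (Sum.inr k) = Sum.inr (Fin.castAdd m k) from rfl,
      bIdx_inr, bIdx_inr, Fin.coe_castAdd]
    omega

theorem B_natAdd_left (i : Fin m) :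
    bIdx (m + m) (n + m) (Sum.inl (Fin.natAdd m i)) = m + (i : ℕ) := by
  rw [bIdx_inl, Fin.coe_natAdd]

theorem B_natAdd_right (i : Fin m) :
    bIdx (m + m) (n + m) (Sum.inr (Fin.natAdd n i)) = m + m + (m - 1 - (i : ℕ)) := by
  have := i.isLt
  rw [bIdx_inr, Fin.coe_natAdd]
  omega

/-- The tensor product of a diagram with the identity diagram `1_m`, as a
diagram. -/
def tensD (r : Diagram m n) : Diagram (m + m) (n + m) where
  pair := tensorPair r (idD m)
  involutive := by
    intro x
    rcases classifyT x with ⟨z, rfl⟩ | ⟨i, rfl⟩ | ⟨i, rfl⟩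
    · rw [tp_iotaT, tp_iotaT, r.involutive]
    · rw [tp_natAdd_left, tp_natAdd_right]
    · rw [tp_natAdd_right, tp_natAdd_left]
  fixedPointFree := by
    intro x
    rcases classifyT x with ⟨z, rfl⟩ | ⟨i, rfl⟩ | ⟨i, rfl⟩
    · rw [tp_iotaT]
      intro h
      exact r.fixedPointFree z (iotaT_inj h)
    · rw [tp_natAdd_left]
      exact fun h => nomatch h
    · rw [tp_natAdd_right]
      exact fun h => nomatch h
  noncrossing := by
    intro x y hcon
    rcases classifyT x with ⟨z1, rfl⟩ | ⟨i1, rfl⟩ | ⟨i1, rfl⟩ <;>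
      rcases classifyT y with ⟨z2, rfl⟩ | ⟨i2, rfl⟩ | ⟨i2, rfl⟩ <;>
        simp only [tp_iotaT, tp_natAdd_left, tp_natAdd_right, B_natAdd_left,
          B_natAdd_right] at hcon <;>
        obtain ⟨h1, h2, h3⟩ := hcon
    · -- LL
      rcases B_iotaT z1 with ⟨e1, f1⟩ | ⟨e1, f1⟩ <;>
        rcases B_iotaT z2 with ⟨e2, f2⟩ | ⟨e2, f2⟩ <;>
          rcases B_iotaT (r.pair z1) with ⟨e3, f3⟩ | ⟨e3, f3⟩ <;>
            rcases B_iotaT (r.pair z2) with ⟨e4, f4⟩ | ⟨e4, f4⟩ <;>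
              exact r.noncrossing z1 z2 ⟨by omega, by omega, by omega⟩
    · have hi := i2.isLt
      rcases B_iotaT z1 with ⟨e1, f1⟩ | ⟨e1, f1⟩ <;>
        rcases B_iotaT (r.pair z1) with ⟨e3, f3⟩ | ⟨e3, f3⟩ <;> omega
    · have hi := i2.isLt
      rcases B_iotaT z1 with ⟨e1, f1⟩ | ⟨e1, f1⟩ <;>
        rcases B_iotaT (r.pair z1) with ⟨e3, f3⟩ | ⟨e3, f3⟩ <;> omega
    · have hi := i1.isLt
      rcases B_iotaT z2 with ⟨e2, f2⟩ | ⟨e2, f2⟩ <;>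
        rcases B_iotaT (r.pair z2) with ⟨e4, f4⟩ | ⟨e4, f4⟩ <;> omega
    · have hi := i1.isLt
      have hi2 := i2.isLt
      omega
    · have hi := i1.isLt
      have hi2 := i2.isLt
      omega
    · have hi := i1.isLt
      rcases B_iotaT z2 with ⟨e2, f2⟩ | ⟨e2, f2⟩ <;>
        rcases B_iotaT (r.pair z2) with ⟨e4, f4⟩ | ⟨e4, f4⟩ <;> omega
    · have hi := i1.isLt
      have hi2 := i2.isLt
      omega
    · have hi := i1.isLt
      have hi2 := i2.isLt
      omega

end TensD

section Bend

variable {m n : ℕ} (r : Diagram m n)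

def outP (m n : ℕ) (j : Fin (n + m)) : Pt 0 (m + m) (n + m) := Sum.inr (Sum.inr j)

def midP (m n : ℕ) (i : Fin (m + m)) : Pt 0 (m + m) (n + m) := Sum.inr (Sum.inl i)

def revF (i : Fin (m + m)) : Fin (m + m) :=
  ⟨m + m - 1 - (i : ℕ), by have := i.isLt; omega⟩

theorem capRD_pair (i : Fin (m + m)) :
    (capRD m).pair (Sum.inr i) = Sum.inr (revF i) := rfl

theorem step_cap (i : Fin (m + m)) :
    Step (capRD m) (tensD r) (midP m n i) (midP m n (revF i)) :=
  Or.inl ⟨Sum.inr i, rfl, by rw [capRD_pair]; rfl⟩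

theorem step_b (u : Fin (m + m) ⊕ Fin (n + m)) :
    Step (capRD m) (tensD r) (Sum.inr u) (Sum.inr (tensorPair r (idD m) u)) :=
  Or.inr ⟨u, rfl, rfl⟩

def gF (m n : ℕ) (i : Fin (m + m)) : Fin (n + m) :=
  if (i : ℕ) < m then ⟨n + (m - 1 - (i : ℕ)), by have := i.isLt; omega⟩
  else ⟨n + ((i : ℕ) - m), by have := i.isLt; omega⟩

theorem gF_val (m n : ℕ) (i : Fin (m + m)) :
    (gF m n i : ℕ) = if (i : ℕ) < m then n + (m - 1 - (i : ℕ)) else n + ((i : ℕ) - m) := by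
  unfold gF
  split <;> rfl

theorem revF_val {m : ℕ} (i : Fin (m + m)) : (revF i : ℕ) = m + m - 1 - (i : ℕ) := rfl

noncomputable def HF : Pt 0 (m + m) (n + m) → Sym2 (Fin (n + m))
  | Sum.inl i => i.elim0
  | Sum.inr (Sum.inl i) => s(gF m n i, bendPerm r (gF m n i))
  | Sum.inr (Sum.inr j) => s(j, bendPerm r j)

theorem gF_revF (m n : ℕ) (i : Fin (m + m)) : gF m n (revF i) = gF m n i := by
  have := i.isLt
  apply Fin.ext
  rw [gF_val, gF_val, revF_val]
  split_ifs <;> omega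

theorem phiE_symm_inl_val (i : Fin m) :
    (((phiE m n).symm (Sum.inl i) : Fin (n + m)) : ℕ) = n + (m - 1 - (i : ℕ)) :=
  rfl

theorem phiE_symm_inr_val (k : Fin n) :
    (((phiE m n).symm (Sum.inr k) : Fin (n + m)) : ℕ) = (k : ℕ) :=
  rfl

theorem HF_iotaT (z : Fin m ⊕ Fin n) :
    HF r (Sum.inr (iotaT m n z)) =
      s((phiE m n).symm z, bendPerm r ((phiE m n).symm z)) := by
  rcases z with i | k
  · show s(gF m n (Fin.castAdd m i), bendPerm r (gF m n (Fin.castAdd m i))) = _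
    have hg : gF m n (Fin.castAdd m i) = (phiE m n).symm (Sum.inl i) := by
      apply Fin.ext
      rw [gF_val, phiE_symm_inl_val, Fin.coe_castAdd, if_pos i.isLt]
    rw [hg]
  · show s(Fin.castAdd m k, bendPerm r (Fin.castAdd m k)) = _
    have hg : (Fin.castAdd m k : Fin (n + m)) = (phiE m n).symm (Sum.inr k) := by
      apply Fin.ext
      rw [phiE_symm_inr_val, Fin.coe_castAdd]
    rw [hg]

theorem bendPerm_symm_apply (z : Fin m ⊕ Fin n) :
    bendPerm r ((phiE m n).symm z) = (phiE m n).symm (r.pair z) := by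
  unfold bendPerm
  rw [Equiv.apply_symm_apply]

theorem gF_natAdd (m n : ℕ) (i : Fin m) : gF m n (Fin.natAdd m i) = Fin.natAdd n i := by
  have := i.isLt
  apply Fin.ext
  rw [gF_val, Fin.coe_natAdd, Fin.coe_natAdd, if_neg (by omega)]
  omega

theorem step_HF {x y : Pt 0 (m + m) (n + m)}
    (h : Step (capRD m) (tensD r) x y) : HF r x = HF r y := by
  rcases h with ⟨u, hx, hy⟩ | ⟨u, hx, hy⟩
  · rcases u with i0 | i
    · exact i0.elim0
    · subst hx; subst hy
      rw [capRD_pair]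
      show s(gF m n i, bendPerm r (gF m n i)) = s(gF m n (revF i), bendPerm r (gF m n (revF i)))
      rw [gF_revF m n]
  · subst hx; subst hy
    rcases classifyT u with ⟨z, rfl⟩ | ⟨i, rfl⟩ | ⟨i, rfl⟩
    · have hp : (tensD r).pair (iotaT m n z) = iotaT m n (r.pair z) := tp_iotaT r z
      rw [hp, HF_iotaT, HF_iotaT, bendPerm_symm_apply, bendPerm_symm_apply,
        r.involutive]
      exact Sym2.eq_swap
    · have hp : (tensD r).pair (Sum.inl (Fin.natAdd m i)) = Sum.inr (Fin.natAdd n i) :=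
        tp_natAdd_left r i
      rw [hp]
      show s(gF m n (Fin.natAdd m i), bendPerm r (gF m n (Fin.natAdd m i)))
        = s(Fin.natAdd n i, bendPerm r (Fin.natAdd n i))
      rw [gF_natAdd]
    · have hp : (tensD r).pair (Sum.inr (Fin.natAdd n i)) = Sum.inl (Fin.natAdd m i) :=
        tp_natAdd_right r i
      rw [hp]
      show s(Fin.natAdd n i, bendPerm r (Fin.natAdd n i))
        = s(gF m n (Fin.natAdd m i), bendPerm r (gF m n (Fin.natAdd m i)))
      rw [gF_natAdd]

theorem conn_HF {x y : Pt 0 (m + m) (n + m)}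
    (h : Conn (capRD m) (tensD r) x y) : HF r x = HF r y := by
  induction h with
  | rel a b hab => exact step_HF r hab
  | refl a => rfl
  | symm a b _ ih => exact ih.symm
  | trans a b c _ _ ih1 ih2 => exact ih1.trans ih2

theorem connA (j : Fin (n + m)) :
    Conn (capRD m) (tensD r) (outP m n j) (Sum.inr (iotaT m n (phiE m n j))) := by
  have hj := j.isLt
  by_cases h : (j : ℕ) < n
  · have he : Sum.inr (iotaT m n (phiE m n j)) = outP m n j := by
      have hphi : phiE m n j = Sum.inr ⟨(j : ℕ), h⟩ := by
        show phiFun m n j = _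
        unfold phiFun
        rw [dif_pos h]
      rw [hphi]
      exact congrArg Sum.inr (congrArg Sum.inr (Fin.ext rfl))
    rw [he]
    exact Relation.EqvGen.refl _
  · set i : Fin m := ⟨(j : ℕ) - n, by omega⟩ with hi
    have hout : outP m n j = Sum.inr (Sum.inr (Fin.natAdd n i)) := by
      exact congrArg Sum.inr (congrArg Sum.inr (Fin.ext (by
        rw [Fin.coe_natAdd]; show (j : ℕ) = n + ((j : ℕ) - n); omega)))
    have h1 : Step (capRD m) (tensD r) (outP m n j) (midP m n (Fin.natAdd m i)) := by
      rw [hout]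
      have := step_b r (Sum.inr (Fin.natAdd n i))
      rw [tensorPair_natAdd_r] at this
      exact this
    have h2 : Step (capRD m) (tensD r) (midP m n (Fin.natAdd m i))
        (midP m n (revF (Fin.natAdd m i))) := step_cap r _
    have he : midP m n (revF (Fin.natAdd m i)) = Sum.inr (iotaT m n (phiE m n j)) := by
      have hphi : phiE m n j = Sum.inl ⟨m - 1 - ((j : ℕ) - n), by omega⟩ := by
        show phiFun m n j = _
        unfold phiFun
        rw [dif_neg h]
      rw [hphi]
      refine congrArg Sum.inr (congrArg Sum.inl (Fin.ext ?_))
      show m + m - 1 - ((Fin.natAdd m i : Fin (m + m)) : ℕ) = _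
      rw [Fin.coe_natAdd, Fin.coe_castAdd]
      show m + m - 1 - (m + ((j : ℕ) - n)) = m - 1 - ((j : ℕ) - n)
      omega
    rw [← he]
    exact Relation.EqvGen.trans _ _ _ (Relation.EqvGen.rel _ _ h1)
      (Relation.EqvGen.rel _ _ h2)

theorem connB (z : Fin m ⊕ Fin n) :
    Conn (capRD m) (tensD r) (Sum.inr (iotaT m n z)) (Sum.inr (iotaT m n (r.pair z))) := by
  have := step_b r (iotaT m n z)
  rw [tp_iotaT] at this
  exact Relation.EqvGen.rel _ _ this

theorem conn_out_bendPerm (j : Fin (n + m)) :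
    Conn (capRD m) (tensD r) (outP m n j) (outP m n (bendPerm r j)) := by
  have h1 := connA r j
  have h2 := connB r (phiE m n j)
  have h3 := connA r (bendPerm r j)
  have he : iotaT m n (phiE m n (bendPerm r j)) = iotaT m n (r.pair (phiE m n j)) := by
    unfold bendPerm
    rw [Equiv.apply_symm_apply]
  rw [he] at h3
  exact Relation.EqvGen.trans _ _ _ h1
    (Relation.EqvGen.trans _ _ _ h2 (Relation.EqvGen.symm _ _ h3))

/-- The bent diagram satisfies the connectivity condition of `compD`. -/
theorem cond_bendD :
    ∀ x : Fin 0 ⊕ Fin (n + m),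
      Conn (capRD m) (tensD r) (Sum.map id Sum.inr x)
        (Sum.map id Sum.inr ((bendD r).pair x)) := by
  rintro (i | j)
  · exact i.elim0
  · exact conn_out_bendPerm r j

/-- Any diagram satisfying the connectivity condition is the bent diagram. -/
theorem cond_unique (c : Diagram 0 (n + m))
    (hc : ∀ x : Fin 0 ⊕ Fin (n + m),
      Conn (capRD m) (tensD r) (Sum.map id Sum.inr x)
        (Sum.map id Sum.inr (c.pair x))) :
    c = bendD r := by
  apply Diagram.ext'
  funext x
  rcases x with i | j
  · exact i.elim0
  · have h := hc (Sum.inr j)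
    rw [pair_inr_alphaOf c j] at h
    have hH := conn_HF r h
    have hH' : s(j, bendPerm r j) = s(alphaOf c j, bendPerm r (alphaOf c j)) := hH
    rcases Sym2.eq_iff.1 hH' with ⟨h1, _⟩ | ⟨_, h2⟩
    · exact absurd h1.symm (alphaOf_fpf c j)
    · rw [pair_inr_alphaOf c j, ← h2]
      rfl

theorem closedMid_empty :
    ∀ x, x ∉ ClosedMid (capRD m) (tensD r) := by
  rintro x ⟨⟨i, rfl⟩, hall⟩
  have hout : ∃ j : Fin (n + m),
      Conn (capRD m) (tensD r) (midP m n i) (outP m n j) := by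
    have hi := i.isLt
    by_cases h : (i : ℕ) < m
    · have h2 : Step (capRD m) (tensD r) (midP m n i) (midP m n (revF i)) := step_cap r i
      have h3 : (revF i : ℕ) = m + m - 1 - (i : ℕ) := rfl
      set i' : Fin m := ⟨(revF i : ℕ) - m, by rw [h3]; omega⟩ with hi'
      have he : midP m n (revF i) = Sum.inr (Sum.inl (Fin.natAdd m i')) := by
        refine congrArg Sum.inr (congrArg Sum.inl (Fin.ext ?_))
        rw [Fin.coe_natAdd]
        show (revF i : ℕ) = m + ((revF i : ℕ) - m)
        rw [h3]; omega
      have h4 := step_b r (Sum.inl (Fin.natAdd m i'))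
      rw [tensorPair_natAdd_l] at h4
      refine ⟨Fin.natAdd n i', ?_⟩
      refine Relation.EqvGen.trans _ _ _ (Relation.EqvGen.rel _ _ h2) ?_
      rw [he]
      exact Relation.EqvGen.rel _ _ h4
    · set i' : Fin m := ⟨(i : ℕ) - m, by omega⟩ with hi'
      have he : midP m n i = Sum.inr (Sum.inl (Fin.natAdd m i')) := by
        refine congrArg Sum.inr (congrArg Sum.inl (Fin.ext ?_))
        rw [Fin.coe_natAdd]
        show (i : ℕ) = m + ((i : ℕ) - m)
        omega
      have h4 := step_b r (Sum.inl (Fin.natAdd m i'))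
      rw [tensorPair_natAdd_l] at h4
      refine ⟨Fin.natAdd n i', ?_⟩
      rw [he]
      exact Relation.EqvGen.rel _ _ h4
  obtain ⟨j, hconn⟩ := hout
  obtain ⟨j', hj'⟩ := hall (outP m n j) hconn
  cases hj'

theorem numLoops_capRD_tensD : numLoops (capRD m) (tensD r) = 0 :=
  numLoops_zero_of_no_closed _ _ (closedMid_empty r)

end Bend

section Algebra

variable {K : Type} [Field K] (d : K)

theorem sum_if_eq {ι : Type} [Fintype ι] {β : Type} [AddCommMonoid β]
    (q0 : ι) (f : ι → β) : (∑ q : ι, if q = q0 then f q else 0) = f q0 := by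
  classical
  rw [Finset.sum_ite_eq' Finset.univ q0 f, if_pos (Finset.mem_univ _)]

theorem comp_single_right {l m n : ℕ} (b : Hom K m n) (a0 : Diagram l m)
    (c : Diagram l n) :
    comp d b (single a0) c = ∑ p : Diagram m n, b p * compD d p a0 c := by
  unfold comp single
  refine Finset.sum_congr rfl fun p _ => ?_
  have h : ∀ q : Diagram l m,
      b p * (if q = a0 then (1 : K) else 0) * compD d p q c
        = if q = a0 then b p * compD d p q c else 0 := by
    intro q
    split_ifs with h
    · ring
    · ring
  rw [Finset.sum_congr rfl fun q _ => h q, sum_if_eq]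

theorem comp_single_left {l m n : ℕ} (b0 : Diagram m n) (a : Hom K l m)
    (c : Diagram l n) :
    comp d (single b0) a c = ∑ q : Diagram l m, a q * compD d b0 q c := by
  unfold comp single
  rw [Finset.sum_comm]
  refine Finset.sum_congr rfl fun q _ => ?_
  have h : ∀ p : Diagram m n,
      (if p = b0 then (1 : K) else 0) * a q * compD d p q c
        = if p = b0 then a q * compD d p q c else 0 := by
    intro p
    split_ifs with h
    · ring
    · ring
  rw [Finset.sum_congr rfl fun p _ => h p, sum_if_eq]

theorem tensor_single_right {m n m' n' : ℕ} (x : Hom K m n) (q0 : Diagram m' n')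
    (c : Diagram (m + m') (n + n')) :
    tensor x (single q0) c = ∑ p : Diagram m n, x p * tensorD p q0 c := by
  unfold tensor single
  refine Finset.sum_congr rfl fun p _ => ?_
  have h : ∀ q : Diagram m' n',
      x p * (if q = q0 then (1 : K) else 0) * tensorD p q c
        = if q = q0 then x p * tensorD p q c else 0 := by
    intro q
    split_ifs with h
    · ring
    · ring
  rw [Finset.sum_congr rfl fun q _ => h q, sum_if_eq]

/-- `tensor x (idHom K 0) = x`. -/
theorem tensor_idHom_zero {m n : ℕ} (x : Hom K m n) :
    @tensor K _ m n 0 0 x (idHom K 0) = x := by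
  funext c
  have hid : (idHom K 0 : Hom K 0 0) = single (idD 0) := rfl
  rw [hid, tensor_single_right]
  have h : ∀ p : Diagram m n, (tensorD p (idD 0) c : K) = if c = p then 1 else 0 := by
    intro p
    unfold tensorD
    rw [tensorPair_idD_zero]
    by_cases h : c = p
    · rw [if_pos (by rw [h]), if_pos h]
    · rw [if_neg (fun hp => h (Diagram.ext' hp)), if_neg h]
  rw [Finset.sum_congr rfl fun p _ => by rw [h p]]
  have h2 : ∀ p : Diagram m n, (x p * if c = p then (1 : K) else 0)
      = if p = c then x p else 0 := by
    intro p
    by_cases h : p = c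
    · rw [if_pos h, if_pos (by rw [h]), mul_one]
    · rw [if_neg h, if_neg (fun hp => h (by rw [hp])), mul_zero]
  rw [Finset.sum_congr rfl fun p _ => h2 p, sum_if_eq]

theorem compD_tensD_capRD {m n : ℕ} (r : Diagram m n) (c : Diagram 0 (n + m)) :
    compD d (tensD r) (capRD m) c = if c = bendD r then 1 else 0 := by
  unfold compD
  rw [numLoops_capRD_tensD, pow_zero]
  by_cases h : c = bendD r
  · rw [if_pos, if_pos h]
    subst h
    exact cond_bendD r
  · rw [if_neg, if_neg h]
    exact fun hcond => h (cond_unique r c hcond)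

/-- Expansion of the bent morphism `(a ⊗ 1_m) ∘ capR`. -/
theorem bend_hom_eq {m n : ℕ} (a : Hom K m n) (c : Diagram 0 (n + m)) :
    comp d (@tensor K _ m n m m a (idHom K m)) (single (capRD m)) c
      = ∑ r : Diagram m n, a r * (if c = bendD r then 1 else 0) := by
  rw [comp_single_right]
  have h : ∀ p : Diagram (m + m) (n + m),
      (@tensor K _ m n m m a (idHom K m)) p
        = ∑ r : Diagram m n, a r * (if p = tensD r then 1 else 0) := by
    intro p
    have hid : (idHom K m : Hom K m m) = single (idD m) := rfl
    rw [hid, tensor_single_right]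
    refine Finset.sum_congr rfl fun r _ => ?_
    congr 1
    unfold tensorD
    by_cases h : p = tensD r
    · rw [if_pos (show p.pair = tensorPair r (idD m) from by rw [h]; rfl), if_pos h]
    · rw [if_neg (show ¬ p.pair = tensorPair r (idD m) from
        fun hp => h (Diagram.ext' hp)), if_neg h]
  rw [Finset.sum_congr rfl fun p _ => by rw [h p, Finset.sum_mul]]
  rw [Finset.sum_comm]
  refine Finset.sum_congr rfl fun r _ => ?_
  have h2 : ∀ p : Diagram (m + m) (n + m),
      a r * (if p = tensD r then (1 : K) else 0) * compD d p (capRD m) c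
        = if p = tensD r then a r * compD d p (capRD m) c else 0 := by
    intro p
    split_ifs <;> ring
  rw [Finset.sum_congr rfl fun p _ => h2 p, sum_if_eq, compD_tensD_capRD]

theorem compD_to_zero {N : ℕ} (s : Diagram N 0) (q : Diagram 0 N) (c : Diagram 0 0) :
    compD d s q c = d ^ numLoops q s := by
  unfold compD
  rw [if_pos]
  rintro (i | i) <;> exact i.elim0

/-- The full pairing formula. -/
theorem pairing_formula {m n : ℕ} (a : Hom K m n) (s : Diagram (n + m) 0) :
    comp d (single s)
      (comp d (@tensor K _ m n m m a (idHom K m)) (single (capRD m))) d00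
      = ∑ r : Diagram m n, a r * d ^ numLoops (bendD r) s := by
  rw [comp_single_left]
  have h : ∀ q : Diagram 0 (n + m),
      (comp d (@tensor K _ m n m m a (idHom K m)) (single (capRD m))) q
        * compD d s q d00
      = ∑ r : Diagram m n,
          a r * (if q = bendD r then 1 else 0) * compD d s q d00 := by
    intro q
    rw [bend_hom_eq, Finset.sum_mul]
  rw [Finset.sum_congr rfl fun q _ => h q]
  rw [Finset.sum_comm]
  refine Finset.sum_congr rfl fun r _ => ?_
  have h2 : ∀ q : Diagram 0 (n + m),
      a r * (if q = bendD r then (1 : K) else 0) * compD d s q d00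
        = if q = bendD r then a r * compD d s q d00 else 0 := by
    intro q
    split_ifs <;> ring
  rw [Finset.sum_congr rfl fun q _ => h2 q, sum_if_eq, compD_to_zero]

end Algebra

section Main

noncomputable def eMat (m n : ℕ) (r' r : Diagram m n) : ℕ :=
  numLoops (bendD r) (transpD (bendD r'))

theorem eMat_eq_cnt {m n : ℕ} (r' r : Diagram m n) :
    eMat m n r' r = cnt (bendPerm r) (bendPerm r') := by
  unfold eMat
  rw [numLoops_eq_cnt]
  rfl

theorem eMat_card {m n : ℕ} (r' r : Diagram m n) :
    eMat m n r' r
      = Fintype.card (Quotient (orbSetoid (bendPerm r) (bendPerm r'))) := by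
  rw [eMat_eq_cnt]
  unfold cnt
  exact Nat.card_eq_fintype_card

theorem eMat_two_mul_diag {m n : ℕ} (r : Diagram m n) :
    2 * eMat m n r r = n + m := by
  rw [eMat_card]
  have h := cnt_diag (bendPerm r) (bendPerm_invol r) (bendPerm_fpf r)
  exact h

theorem eMat_le {m n : ℕ} (r' r : Diagram m n) : 2 * eMat m n r' r ≤ n + m := by
  rw [eMat_card]
  exact cnt_two_le (bendPerm r) (bendPerm r') (bendPerm_fpf r)

theorem eMat_eq_imp {m n : ℕ} (r' r : Diagram m n)
    (h : 2 * eMat m n r' r = n + m) : r' = r := by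
  have hba := orb_beta_eq_alpha (bendPerm r) (bendPerm r') (bendPerm_invol r)
    (bendPerm_fpf r) (bendPerm_fpf r') (by rw [← eMat_card r' r]; exact h)
  apply Diagram.ext'
  funext z
  have hz := hba ((phiE m n).symm z)
  rw [bendPerm_symm_apply, bendPerm_symm_apply] at hz
  exact (phiE m n).symm.injective hz

end Main

section Det

theorem detM_ne_zero (m n : ℕ) (r0 : Diagram m n) :
    ((Matrix.of fun r' r : Diagram m n =>
      (RatFunc.X + (RatFunc.X)⁻¹) ^ eMat m n r' r :
        Matrix (Diagram m n) (Diagram m n) (RatFunc ℂ))).det ≠ 0 := by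
  classical
  set DD : RatFunc ℂ := RatFunc.X + (RatFunc.X)⁻¹ with hDD
  set C := Fintype.card (Diagram m n) with hC
  set K0 := eMat m n r0 r0 with hK0
  have hhalf : 2 * K0 = n + m := eMat_two_mul_diag r0
  have hdiag : ∀ r : Diagram m n, eMat m n r r = K0 := by
    intro r
    have := eMat_two_mul_diag r
    omega
  have hle : ∀ r' r : Diagram m n, eMat m n r' r ≤ K0 := by
    intro r' r
    have := eMat_le r' r
    omega
  have heqi : ∀ r' r : Diagram m n, eMat m n r' r = K0 → r' = r := by
    intro r' r h
    exact eMat_eq_imp r' r (by omega)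
  set E : Equiv.Perm (Diagram m n) → ℕ := fun σ => ∑ r : Diagram m n, eMat m n (σ r) r
    with hE
  have hE_le : ∀ σ, E σ ≤ C * K0 := by
    intro σ
    calc E σ ≤ ∑ _r : Diagram m n, K0 := Finset.sum_le_sum fun r _ => hle (σ r) r
      _ = C * K0 := by rw [Finset.sum_const, Finset.card_univ, smul_eq_mul]
  have hE_id : E 1 = C * K0 := by
    rw [hE]
    simp only [Equiv.Perm.coe_one, id_eq]
    rw [Finset.sum_congr rfl fun r _ => hdiag r, Finset.sum_const,
      Finset.card_univ, smul_eq_mul]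
  have hE_lt : ∀ σ : Equiv.Perm (Diagram m n), σ ≠ 1 → E σ < C * K0 := by
    intro σ hσ
    have hex : ∃ i : Diagram m n, σ i ≠ i := by
      by_contra hcon
      push_neg at hcon
      exact hσ (Equiv.ext hcon)
    obtain ⟨i, hi⟩ := hex
    have hlt : eMat m n (σ i) i < K0 :=
      lt_of_le_of_ne (hle (σ i) i) (fun h => hi (heqi (σ i) i h))
    calc E σ < ∑ r : Diagram m n, K0 :=
        Finset.sum_lt_sum (fun r _ => hle (σ r) r) ⟨i, Finset.mem_univ _, hlt⟩
      _ = C * K0 := by rw [Finset.sum_const, Finset.card_univ, smul_eq_mul]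
  have hdet : (Matrix.of fun r' r : Diagram m n => DD ^ eMat m n r' r).det
      = ∑ σ : Equiv.Perm (Diagram m n), Equiv.Perm.sign σ • DD ^ E σ := by
    rw [Matrix.det_apply]
    refine Finset.sum_congr rfl fun σ _ => ?_
    congr 1
    rw [← Finset.prod_pow_eq_pow_sum]
    rfl
  set cc : ℕ → ℤ := fun j =>
    ∑ σ ∈ Finset.univ.filter (fun σ : Equiv.Perm (Diagram m n) => E σ = j),
      ((Equiv.Perm.sign σ : ℤˣ) : ℤ) with hcc
  have hfib : ∑ σ : Equiv.Perm (Diagram m n), Equiv.Perm.sign σ • DD ^ E σ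
      = ∑ j ∈ Finset.range (C * K0 + 1), (cc j : RatFunc ℂ) * DD ^ j := by
    rw [← Finset.sum_fiberwise_of_maps_to
      (g := E) (t := Finset.range (C * K0 + 1))
      (fun σ _ => Finset.mem_range.2 (by have := hE_le σ; omega))
      (fun σ => Equiv.Perm.sign σ • DD ^ E σ)]
    refine Finset.sum_congr rfl fun j hj => ?_
    have hterm : ∀ σ ∈ Finset.univ.filter
        (fun σ : Equiv.Perm (Diagram m n) => E σ = j),
        Equiv.Perm.sign σ • DD ^ E σ
          = (((Equiv.Perm.sign σ : ℤˣ) : ℤ) : RatFunc ℂ) * DD ^ j := by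
      intro σ hσ
      have hEj : E σ = j := (Finset.mem_filter.1 hσ).2
      rw [hEj, Units.smul_def, zsmul_eq_mul]
    rw [Finset.sum_congr rfl hterm, ← Finset.sum_mul]
    congr 1
    rw [hcc]
    push_cast
    rfl
  have hcctop : cc (C * K0) = 1 := by
    have hfilter : Finset.univ.filter
        (fun σ : Equiv.Perm (Diagram m n) => E σ = C * K0) = {1} := by
      ext σ
      simp only [Finset.mem_filter, Finset.mem_univ, true_and, Finset.mem_singleton]
      constructor
      · intro h
        by_contra hne
        exact absurd h (Nat.ne_of_lt (hE_lt σ hne))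
      · intro h
        rw [h]
        exact hE_id
    rw [hcc]
    simp only []
    rw [hfilter, Finset.sum_singleton, map_one, Units.val_one]
  rw [hdet, hfib]
  exact TLdlin (C * K0) cc (by rw [hcctop]; exact one_ne_zero)

theorem exists_row (m n : ℕ) (a : Hom (RatFunc ℂ) m n) (ha : a ≠ 0) :
    ∃ r' : Diagram m n,
      (∑ r : Diagram m n, a r * (RatFunc.X + (RatFunc.X)⁻¹) ^ eMat m n r' r) ≠ 0 := by
  classical
  have hr0 : ∃ r0, a r0 ≠ 0 := by
    by_contra hcon
    push_neg at hcon
    exact ha (funext hcon)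
  obtain ⟨r0, har0⟩ := hr0
  set DD : RatFunc ℂ := RatFunc.X + (RatFunc.X)⁻¹ with hDD
  set M : Matrix (Diagram m n) (Diagram m n) (RatFunc ℂ) :=
    Matrix.of fun r' r : Diagram m n => DD ^ eMat m n r' r with hM
  have hdet : M.det ≠ 0 := detM_ne_zero m n r0
  by_contra hall
  push_neg at hall
  have hmv : M.mulVec a = 0 := by
    funext r'
    show ∑ r : Diagram m n, M r' r * a r = 0
    rw [Finset.sum_congr rfl fun r _ => mul_comm (M r' r) (a r)]
    exact hall r'
  have hazero : a = 0 := by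
    calc a = (1 : Matrix (Diagram m n) (Diagram m n) (RatFunc ℂ)).mulVec a :=
        (Matrix.one_mulVec a).symm
      _ = (M⁻¹ * M).mulVec a := by
          rw [Matrix.nonsing_inv_mul M (isUnit_iff_ne_zero.2 hdet)]
      _ = M⁻¹.mulVec (M.mulVec a) := (Matrix.mulVec_mulVec a M⁻¹ M).symm
      _ = 0 := by rw [hmv, Matrix.mulVec_zero]
  exact har0 (by rw [hazero]; rfl)

end Det

section Final

set_option synthInstance.maxHeartbeats 1000000 in
set_option maxHeartbeats 1000000 in
theorem J_full (J : ∀ m n : ℕ, Set (Hom (RatFunc ℂ) m n))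
    (hJ : IsIdeal (RatFunc.X + (RatFunc.X)⁻¹) J)
    {m n : ℕ} (a : Hom (RatFunc ℂ) m n) (haJ : a ∈ J m n) (ha : a ≠ 0) :
    ∀ M N : ℕ, J M N = Set.univ := by
  classical
  obtain ⟨r', hpair⟩ := exists_row m n a ha
  set d : RatFunc ℂ := RatFunc.X + (RatFunc.X)⁻¹ with hd
  set u : Hom (RatFunc ℂ) 0 (n + m) :=
    comp d (@tensor (RatFunc ℂ) _ m n m m a (idHom (RatFunc ℂ) m))
      (single (capRD m)) with hu
  have huJ : u ∈ J 0 (n + m) :=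
    hJ.comp_mem_right _ _ (hJ.tensor_mem_left a (idHom (RatFunc ℂ) m) haJ)
  set w : Hom (RatFunc ℂ) 0 0 := comp d (single (transpD (bendD r'))) u with hw
  have hwJ : w ∈ J 0 0 := hJ.comp_mem_left _ _ huJ
  have hw0 : w d00 ≠ 0 := by
    rw [hw, hu, pairing_formula]
    exact hpair
  have hJ00 : ∀ y : Hom (RatFunc ℂ) 0 0, y ∈ J 0 0 := by
    intro y
    have hmem := hJ.smul_mem 0 0 (y d00 * (w d00)⁻¹) w hwJ
    have hy : (y d00 * (w d00)⁻¹) • w = y := by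
      funext c
      rw [eq_d00 c]
      show y d00 * (w d00)⁻¹ * w d00 = y d00
      field_simp
    rwa [hy] at hmem
  intro M N
  rw [Set.eq_univ_iff_forall]
  intro y
  have ht := hJ.tensor_mem_right (m := M) (n := N) y (idHom (RatFunc ℂ) 0) (hJ00 _)
  rwa [tensor_idHom_zero] at ht

end Final

/-- The generic Temperley–Lieb category `TL` (over `K = ℂ(t)`
with `d = t + t⁻¹`) has no nonzero proper ideal. -/
theorem stmt1 (J : ∀ m n : ℕ, Set (Hom (RatFunc ℂ) m n))
    (hJ : IsIdeal (RatFunc.X + (RatFunc.X)⁻¹) J) :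
    ¬ (IdealNonzero J ∧ IdealProper J) := by
  rintro ⟨⟨m, n, a, haJ, ha0⟩, M', N', hMN⟩
  exact hMN (J_full J hJ a haJ ha0 M' N')

end TL
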